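/- arXiv:2404.06952 — 5 statements merged into one kernel-verified Lean document; each statement's English description precedes it below -/
import Mathlib

section
/- Let h ∈ ℂ^μ and β ∈ ℂ^n. Define the liftings h^⇑ = Σ_{k∈[μ]} h_k e_k^{nμ} ∈ ℂ^{nμ} and β^↑ = Σ_{k∈[n]} β_k e_{kμ}^{nμ} ∈ ℂ^{nμ}. Then the circular convolution h^⇑ ∗ β^↑ equals the vectorization of the tensor h ⊗ β, i.e., (h^⇑ ∗ β^↑)_{j + kμ} = h_j β_k for all j ∈ [μ], k ∈ [n]. -/
/-- Circular convolution in `ℂ^N` indexed by `ZMod N`. -/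
noncomputable def cconv {N : ℕ} [NeZero N] (u v : ZMod N → ℂ) : ZMod N → ℂ :=
  fun a => ∑ b : ZMod N, u b * v (a - b)

/-- Lifting `h^⇑ = ∑_{k ∈ [μ]} h_k e_k^{nμ} ∈ ℂ^{nμ}` of `h ∈ ℂ^μ`. -/
noncomputable def liftH (n : ℕ) {μ : ℕ} [NeZero n] [NeZero μ] (h : Fin μ → ℂ) :
    ZMod (n * μ) → ℂ :=
  ∑ k : Fin μ, h k • (Pi.single (((k : ℕ) : ZMod (n * μ))) (1 : ℂ) : ZMod (n * μ) → ℂ)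

/-- Lifting `β^↑ = ∑_{k ∈ [n]} β_k e_{kμ}^{nμ} ∈ ℂ^{nμ}` of `β ∈ ℂ^n`. -/
noncomputable def liftB {n : ℕ} (μ : ℕ) [NeZero n] [NeZero μ] (β : Fin n → ℂ) :
    ZMod (n * μ) → ℂ :=
  ∑ k : Fin n, β k • (Pi.single ((((k : ℕ) * μ : ℕ) : ZMod (n * μ))) (1 : ℂ) : ZMod (n * μ) → ℂ)

/-!
Both lifts are combinations of unit vectors, and `e_x ∗ e_y = e_{x+y}`, so by bilinearity
`h^⇑ ∗ β^↑ = ∑_{i,k} h_i β_k e_{i + kμ}`. The indices `i + kμ` are mixed-radix representations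
in `[nμ]`, hence pairwise distinct, and at `j + kμ` only the term `h_j β_k` survives.
-/

section Convolution

variable {N : ℕ} [NeZero N]

lemma cconv_sum_left {ι : Type*} (s : Finset ι) (u : ι → ZMod N → ℂ) (v : ZMod N → ℂ) :
    cconv (∑ i ∈ s, u i) v = ∑ i ∈ s, cconv (u i) v := by
  ext a
  simp only [cconv, Finset.sum_apply, Finset.sum_mul]
  exact Finset.sum_comm

lemma cconv_smul_left (c : ℂ) (u v : ZMod N → ℂ) : cconv (c • u) v = c • cconv u v := by
  ext a
  simp only [cconv, Pi.smul_apply, smul_eq_mul, Finset.mul_sum, mul_assoc]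

lemma cconv_single_left (x : ZMod N) (u : ZMod N → ℂ) (a : ZMod N) :
    cconv (Pi.single x 1) u a = u (a - x) := by
  simp [cconv, Pi.single_apply]

end Convolution

lemma natCast_add_mul_eq_iff {n μ : ℕ} (i j : Fin μ) (k l : Fin n) :
    (((i : ℕ) + (k : ℕ) * μ : ℕ) : ZMod (n * μ)) = (((j : ℕ) + (l : ℕ) * μ : ℕ) : ZMod (n * μ)) ↔
      i = j ∧ k = l := by
  have hval (i : Fin μ) (k : Fin n) : (i : ℕ) + (k : ℕ) * μ = finProdFinEquiv (k, i) := by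
    simp [finProdFinEquiv, mul_comm]
  rw [ZMod.natCast_eq_natCast_iff', hval, hval, Nat.mod_eq_of_lt (Fin.is_lt _),
    Nat.mod_eq_of_lt (Fin.is_lt _), Fin.val_inj, finProdFinEquiv.apply_eq_iff_eq]
  simp [and_comm]

lemma cconv_liftH_liftB_apply {n μ : ℕ} [NeZero n] [NeZero μ] (h : Fin μ → ℂ) (β : Fin n → ℂ)
    (a : ZMod (n * μ)) :
    cconv (liftH n h) (liftB μ β) a =
      ∑ i : Fin μ, ∑ k : Fin n, if (((i : ℕ) + (k : ℕ) * μ : ℕ) : ZMod (n * μ)) = a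
        then h i * β k else 0 := by
  simp only [liftH, cconv_sum_left, cconv_smul_left, Finset.sum_apply, Pi.smul_apply,
    cconv_single_left, liftB, smul_eq_mul, Finset.mul_sum, Pi.single_apply]
  refine Fintype.sum_congr _ _ fun i => Fintype.sum_congr _ _ fun k => ?_
  have hshift :
      a - i = ((k * μ : ℕ) : ZMod (n * μ)) ↔ (((i : ℕ) + k * μ : ℕ) : ZMod (n * μ)) = a := by
    rw [sub_eq_iff_eq_add', Nat.cast_add, eq_comm]
  simp only [hshift, mul_ite, mul_one, mul_zero]

/-- The circular convolution `h^⇑ ∗ β^↑` equals `vec(h ⊗ β)`: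
its entry at index `j + kμ` equals `h_j β_k` for all `j ∈ [μ]`, `k ∈ [n]`. -/
theorem stmt1 {n μ : ℕ} [NeZero n] [NeZero μ] (h : Fin μ → ℂ) (β : Fin n → ℂ)
    (j : Fin μ) (k : Fin n) :
    cconv (liftH n h) (liftB μ β) ((((j : ℕ) + (k : ℕ) * μ : ℕ)) : ZMod (n * μ)) =
      h j * β k := by
  simp only [cconv_liftH_liftB_apply, natCast_add_mul_eq_iff, ite_and, Finset.sum_ite_irrel,
    Finset.sum_const_zero, Fintype.sum_ite_eq']
end

section
/- For h ∈ ℂ^μ and β_A, β_B ∈ ℂ^n, Alice's and Bob's secrets coincide: the pointwise product of the DFTs of vec(h ⊗ β_B) and vec(e_0^μ ⊗ β_A) equals the pointwise product of the DFTs of vec(h ⊗ β_A) and vec(e_0^μ ⊗ β_B), both being equal to the pointwise product (DFT of h^⇑)·(DFT of β_A^↑)·(DFT of β_B^↑) in ℂ^{nμ}. -/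
/-- `vec(h ⊗ β) ∈ ℂ^{nμ}`, with entry `h_j β_k` at index `j + kμ`. -/
noncomputable def vecT {n μ : ℕ} [NeZero n] [NeZero μ] (h : Fin μ → ℂ) (β : Fin n → ℂ) :
    ZMod (n * μ) → ℂ :=
  ∑ j : Fin μ, ∑ k : Fin n,
    (h j * β k) •
      (Pi.single ((((j : ℕ) + (k : ℕ) * μ : ℕ) : ZMod (n * μ))) (1 : ℂ) : ZMod (n * μ) → ℂ)

/-- Discrete Fourier transform on `ℂ^N`. -/
noncomputable def dft {N : ℕ} [NeZero N] (f : ZMod N → ℂ) : ZMod N → ℂ :=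
  fun j => ∑ a : ZMod N,
    f a * Complex.exp (-2 * Real.pi * Complex.I * ((j.val : ℂ) * (a.val : ℂ)) / N)

noncomputable def dftRoot (N : ℕ) (j : ZMod N) : ℂ :=
  Complex.exp (-2 * Real.pi * Complex.I * j.val / N)

section DFT

variable {N : ℕ} [NeZero N]

lemma dftRoot_pow_self (j : ZMod N) : dftRoot N j ^ N = 1 := by
  have hN : (N : ℂ) ≠ 0 := Nat.cast_ne_zero.mpr (NeZero.ne N)
  rw [dftRoot, ← Complex.exp_nat_mul]
  have : (N : ℂ) * (-2 * Real.pi * Complex.I * j.val / N) =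
      (-(j.val : ℤ) : ℤ) * (2 * Real.pi * Complex.I) := by
    push_cast
    field_simp
  rw [this, Complex.exp_int_mul_two_pi_mul_I]

lemma dft_single_natCast (c : ℕ) (j : ZMod N) :
    dft (Pi.single (c : ZMod N) (1 : ℂ)) j = dftRoot N j ^ c := by
  rw [dft, Finset.sum_eq_single_of_mem (c : ZMod N) (Finset.mem_univ _)
    fun a _ ha => by rw [Pi.single_eq_of_ne ha, zero_mul]]
  rw [Pi.single_eq_same, one_mul, ZMod.val_natCast, pow_eq_pow_mod c (dftRoot_pow_self j),
    dftRoot, ← Complex.exp_nat_mul]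
  congr 1
  ring

lemma dft_sum {ι : Type*} (s : Finset ι) (f : ι → ZMod N → ℂ) (j : ZMod N) :
    dft (∑ i ∈ s, f i) j = ∑ i ∈ s, dft (f i) j := by
  simp only [dft, Finset.sum_apply, Finset.sum_mul]
  exact Finset.sum_comm

lemma dft_smul (c : ℂ) (f : ZMod N → ℂ) (j : ZMod N) : dft (c • f) j = c * dft f j := by
  simp only [dft, Pi.smul_apply, smul_eq_mul, Finset.mul_sum, mul_assoc]

lemma dft_sum_smul_single {ι : Type*} (s : Finset ι) (w : ι → ℂ) (a : ι → ℕ) (j : ZMod N) :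
    dft (∑ i ∈ s, w i • Pi.single (a i : ZMod N) (1 : ℂ)) j =
      ∑ i ∈ s, w i * dftRoot N j ^ a i := by
  simp only [dft_sum, dft_smul, dft_single_natCast]

end DFT

section Lifts

variable {n μ : ℕ} [NeZero n] [NeZero μ]

lemma dft_liftH (h : Fin μ → ℂ) (j : ZMod (n * μ)) :
    dft (liftH n h) j = ∑ k, h k * dftRoot (n * μ) j ^ (k : ℕ) :=
  dft_sum_smul_single _ _ _ _

lemma dft_liftB (β : Fin n → ℂ) (j : ZMod (n * μ)) :
    dft (liftB μ β) j = ∑ k, β k * dftRoot (n * μ) j ^ ((k : ℕ) * μ) :=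
  dft_sum_smul_single _ _ _ _

lemma dft_vecT (h : Fin μ → ℂ) (β : Fin n → ℂ) :
    dft (vecT h β) = dft (liftH n h) * dft (liftB μ β) := by
  funext j
  rw [vecT, ← Fintype.sum_prod_type', dft_sum_smul_single, Pi.mul_apply, dft_liftH, dft_liftB,
    Fintype.sum_mul_sum, ← Fintype.sum_prod_type']
  refine Finset.sum_congr rfl fun p _ => ?_
  rw [pow_add]
  ring

lemma dft_liftH_single_zero : dft (liftH n (Pi.single (0 : Fin μ) (1 : ℂ))) = 1 := by
  funext j
  rw [dft_liftH, Fintype.sum_eq_single 0 fun k hk => by rw [Pi.single_eq_of_ne hk, zero_mul]]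
  simp

end Lifts

/-- Alice's and Bob's secrets coincide:
`DFT(vec(h ⊗ β_B)) · DFT(vec(e_0^μ ⊗ β_A)) = DFT(vec(h ⊗ β_A)) · DFT(vec(e_0^μ ⊗ β_B))`,
both equal to `DFT(h^⇑) · DFT(β_A^↑) · DFT(β_B^↑)` (pointwise products in `ℂ^{nμ}`). -/
theorem stmt2 {n μ : ℕ} [NeZero n] [NeZero μ] (h : Fin μ → ℂ) (βA βB : Fin n → ℂ) :
    dft (vecT h βB) * dft (vecT (Pi.single (0 : Fin μ) (1 : ℂ)) βA) =
        dft (liftH n h) * dft (liftB μ βA) * dft (liftB μ βB) ∧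
      dft (vecT h βA) * dft (vecT (Pi.single (0 : Fin μ) (1 : ℂ)) βB) =
        dft (liftH n h) * dft (liftB μ βA) * dft (liftB μ βB) := by
  simp only [dft_vecT, dft_liftH_single_zero, one_mul, and_true]
  exact mul_right_comm _ _ _
end

section
/- Let Σ be a 2k-element subset of ℤ/n whose sumset Σ+Σ (mod n) has the maximal possible cardinality for unordered pairs. Let σ, σ' be k-element subsets of Σ with σ ≠ σ' and σ ≠ Σ∖σ'. Then there exist a₀, b₀ ∈ Σ with a₀ ≠ b₀ such that a₀ + b₀ lies in exactly one of the two sumsets σ + (Σ∖σ) and σ' + (Σ∖σ'), but not both. -/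
/-! Take `x ∈ σ \ σ'` and `y ∈ σ ∩ σ'` (both exist by counting). Then `x + y` is visibly in
`σ' + (T \ σ')`. It is not in `σ + (T \ σ)`: by uniqueness of pair sums, a representation
`x + y = a + b` with `a ∈ σ`, `b ∉ σ` would force `b ∈ {x, y} ⊆ σ`. -/

open Pointwise

namespace Finset

variable {G : Type*} [DecidableEq G]

theorem sdiff_nonempty_of_card_le_of_ne {s t : Finset G} (hcard : #t ≤ #s) (hne : s ≠ t) :
    (s \ t).Nonempty :=
  sdiff_nonempty.mpr fun hst => hne (eq_of_subset_of_card_le hst hcard)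

theorem inter_nonempty_of_ne_sdiff {T s t : Finset G} (hs : s ⊆ T) (ht : t ⊆ T)
    (hcard : #T ≤ #s + #t) (hne : s ≠ T \ t) : (s ∩ t).Nonempty := by
  rw [nonempty_iff_ne_empty, Ne, ← disjoint_iff_inter_eq_empty]
  intro hdisj
  have hunion : s ∪ t = T :=
    eq_of_subset_of_card_le (union_subset hs ht) (by rwa [card_union_of_disjoint hdisj])
  exact hne (by rw [← hunion, union_sdiff_cancel_right hdisj])

theorem add_notMem_add_sdiff [Add G] {T s : Finset G}
    (hmax : ∀ a ∈ T, ∀ b ∈ T, ∀ c ∈ T, ∀ d ∈ T,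
      a ≠ b → c ≠ d → a + b = c + d → ({a, b} : Finset G) = {c, d})
    (hs : s ⊆ T) {x y : G} (hx : x ∈ s) (hy : y ∈ s) (hxy : x ≠ y) :
    x + y ∉ s + (T \ s) := by
  simp only [mem_add, mem_sdiff]
  rintro ⟨a, ha, b, ⟨hbT, hbs⟩, hab⟩
  have hpair := hmax a (hs ha) b hbT x (hs hx) y (hs hy) (fun h => hbs (h ▸ ha)) hxy hab
  have hb : b ∈ ({x, y} : Finset G) := hpair ▸ mem_insert_of_mem (mem_singleton_self b)
  rcases mem_insert.mp hb with rfl | hb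
  · exact hbs hx
  · exact hbs (mem_singleton.mp hb ▸ hy)

end Finset

open Finset in
theorem stmt5_general {n k : ℕ} (T : Finset (ZMod n)) (hT : T.card = 2 * k)
    (hmax : ∀ a ∈ T, ∀ b ∈ T, ∀ c ∈ T, ∀ d ∈ T,
      a ≠ b → c ≠ d → a + b = c + d → ({a, b} : Finset (ZMod n)) = {c, d})
    (σ σ' : Finset (ZMod n)) (hσ : σ ⊆ T) (hσ' : σ' ⊆ T)
    (hc : σ.card = k) (hc' : σ'.card = k)
    (hne : σ ≠ σ') (hne2 : σ ≠ T \ σ') :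
    ∃ a₀ ∈ T, ∃ b₀ ∈ T, a₀ ≠ b₀ ∧
      Xor' (a₀ + b₀ ∈ σ + (T \ σ)) (a₀ + b₀ ∈ σ' + (T \ σ')) := by
  obtain ⟨x, hx⟩ := sdiff_nonempty_of_card_le_of_ne (by omega) hne
  obtain ⟨y, hy⟩ := inter_nonempty_of_ne_sdiff hσ hσ' (by omega) hne2
  rw [mem_sdiff] at hx
  rw [mem_inter] at hy
  have hxy : x ≠ y := fun h => hx.2 (h ▸ hy.2)
  refine ⟨x, hσ hx.1, y, hσ hy.1, hxy, Or.inr ⟨?_, add_notMem_add_sdiff hmax hσ hx.1 hy.1 hxy⟩⟩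
  rw [add_comm x y]
  exact add_mem_add hy.2 (mem_sdiff.mpr ⟨hσ hx.1, hx.2⟩)

/-- Given a `2k`-element set `T ⊆ ℤ/n` with maximal sumset (the map
`{a,b} ↦ a+b` is injective on unordered pairs of distinct elements of `T`),
and `k`-element subsets `σ ≠ σ'` of `T` with `σ ≠ T \ σ'`, there exist
`a₀ ≠ b₀` in `T` such that `a₀ + b₀` lies in exactly one of the sumsets
`σ + (T \ σ)` and `σ' + (T \ σ')`. -/
theorem stmt5 {n k : ℕ} [NeZero n] (T : Finset (ZMod n)) (hT : T.card = 2 * k)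
    (hmax : ∀ a ∈ T, ∀ b ∈ T, ∀ c ∈ T, ∀ d ∈ T,
      a ≠ b → c ≠ d → a + b = c + d → ({a, b} : Finset (ZMod n)) = {c, d})
    (σ σ' : Finset (ZMod n)) (hσ : σ ⊆ T) (hσ' : σ' ⊆ T)
    (hc : σ.card = k) (hc' : σ'.card = k)
    (hne : σ ≠ σ') (hne2 : σ ≠ T \ σ') :
    ∃ a₀ ∈ T, ∃ b₀ ∈ T, a₀ ≠ b₀ ∧
      Xor' (a₀ + b₀ ∈ σ + (T \ σ)) (a₀ + b₀ ∈ σ' + (T \ σ')) :=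
  stmt5_general T hT hmax σ σ' hσ hσ' hc hc' hne hne2
end

section
/- Let α₀,...,α_{2k−1} be i.i.d. uniform on [0,1] and let 0 ≤ δ < 1. Then P((1−δ)·max_{0≤i≤k−1} α_i ≤ min_{k≤i≤2k−1} α_i) = (k/(1−δ)^k)·∫₀^{1−δ} x^k (1−x)^{k−1} dx + δ^k. -/
/-!
Split the coordinates into the two blocks and apply Fubini, integrating out the second block
first: given the first block with maximum `m ∈ [0,1]`, the event `c * m ≤ min` has probability
`(1 - c m)^k`, and the maximum of `k` uniform variables has density `k t^(k-1)` on `[0,1]`.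
With `c = 1 - δ` the probability is therefore `∫₀¹ k t^(k-1) (1 - c t)^k dt`; integrating by
parts against `t^k (1 - c t)^k` and substituting `x = c t` gives the closed form.
-/

open MeasureTheory Set

local notation "𝕌" => volume.restrict (Icc (0 : ℝ) 1)

lemma uniform_Iic (t : ℝ) : 𝕌 (Iic t) = ENNReal.ofReal (min t 1) := by
  have : Iic t ∩ Icc 0 1 = Icc 0 (min t 1) := by ext; simp [and_left_comm]
  rw [Measure.restrict_apply measurableSet_Iic, this, Real.volume_Icc, sub_zero]

lemma uniform_Ici (c : ℝ) : 𝕌 (Ici c) = ENNReal.ofReal (1 - max c 0) := by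
  have : Ici c ∩ Icc 0 1 = Icc (max c 0) 1 := by ext; simp [and_assoc]
  rw [Measure.restrict_apply measurableSet_Ici, this, Real.volume_Icc]

lemma lintegral_Icc_natCast_mul_pow_pred {n : ℕ} (hn : n ≠ 0) (a : ℝ) :
    ∫⁻ s in Icc 0 a, ENNReal.ofReal (n * s ^ (n - 1)) = ENNReal.ofReal a ^ n := by
  rcases lt_or_ge a 0 with ha | ha
  · rw [Icc_eq_empty_of_lt ha, Measure.restrict_empty, lintegral_zero_measure,
      ENNReal.ofReal_of_nonpos ha.le, zero_pow hn]
  have hderiv : ∫ s in (0 : ℝ)..a, (n : ℝ) * s ^ (n - 1) = a ^ n := by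
    rw [intervalIntegral.integral_eq_sub_of_hasDerivAt (fun s _ => hasDerivAt_pow n s)
      (by apply Continuous.intervalIntegrable; fun_prop), zero_pow hn, sub_zero]
  rw [← ofReal_integral_eq_lintegral_ofReal, integral_Icc_eq_integral_Ioc,
    ← intervalIntegral.integral_of_le ha, hderiv, ENNReal.ofReal_pow ha]
  · exact (Continuous.continuousOn (by fun_prop)).integrableOn_Icc
  · exact (ae_restrict_iff' measurableSet_Icc).2 (ae_of_all _ fun s hs => by
      have := hs.1; positivity)

section

variable {ι : Type*} [Fintype ι] [Nonempty ι]

lemma pi_uniform_iSup_le (t : ℝ) :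
    Measure.pi (fun _ : ι => 𝕌) {x | ⨆ i, x i ≤ t}
      = ENNReal.ofReal (min t 1) ^ Fintype.card ι := by
  have : {x : ι → ℝ | ⨆ i, x i ≤ t} = univ.pi fun _ => Iic t := by
    ext x
    simp only [mem_ofPred_eq, mem_univ_pi, mem_Iic]
    exact ciSup_le_iff (finite_range x).bddAbove
  rw [this, Measure.pi_pi, Finset.prod_const, uniform_Iic, Finset.card_univ]

lemma pi_uniform_le_iInf (c : ℝ) :
    Measure.pi (fun _ : ι => 𝕌) {x | c ≤ ⨅ i, x i}
      = ENNReal.ofReal (1 - max c 0) ^ Fintype.card ι := by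
  have : {x : ι → ℝ | c ≤ ⨅ i, x i} = univ.pi fun _ => Ici c := by
    ext x
    simp only [mem_ofPred_eq, mem_univ_pi, mem_Ici]
    exact le_ciInf_iff (finite_range x).bddBelow
  rw [this, Measure.pi_pi, Finset.prod_const, uniform_Ici, Finset.card_univ]

lemma map_iSup_pi_uniform :
    (Measure.pi fun _ : ι => 𝕌).map (fun x => ⨆ i, x i)
      = volume.withDensity ((Icc 0 1).indicator
          fun t => ENNReal.ofReal (Fintype.card ι * t ^ (Fintype.card ι - 1))) := by
  refine Measure.ext_of_Iic _ _ fun t => ?_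
  have hIcc : Icc 0 1 ∩ Iic t = Icc 0 (min t 1) := by ext; simp [and_left_comm, and_comm]
  rw [Measure.map_apply (by fun_prop) measurableSet_Iic, withDensity_apply _ measurableSet_Iic,
    setLIntegral_indicator measurableSet_Icc, hIcc,
    lintegral_Icc_natCast_mul_pow_pred Fintype.card_ne_zero]
  exact pi_uniform_iSup_le t

lemma lintegral_comp_iSup_pi_uniform {g : ℝ → ENNReal} (hg : Measurable g) :
    ∫⁻ x, g (⨆ i, x i) ∂(Measure.pi fun _ : ι => 𝕌)
      = ∫⁻ t in Icc 0 1,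
          ENNReal.ofReal (Fintype.card ι * t ^ (Fintype.card ι - 1)) * g t := by
  rw [← lintegral_map hg (by fun_prop), map_iSup_pi_uniform,
    withDensity_indicator measurableSet_Icc,
    lintegral_withDensity_eq_lintegral_mul _ (by fun_prop) hg]
  rfl

end

lemma prod_pi_uniform_mul_iSup_le_iInf {ι κ : Type*} [Fintype ι] [Nonempty ι] [Fintype κ]
    [Nonempty κ] {c : ℝ} (hc0 : 0 ≤ c) (hc1 : c ≤ 1) :
    ((Measure.pi fun _ : ι => 𝕌).prod (Measure.pi fun _ : κ => 𝕌))
        {z | c * ⨆ i, z.1 i ≤ ⨅ j, z.2 j}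
      = ENNReal.ofReal (∫ t in (0 : ℝ)..1,
          Fintype.card ι * t ^ (Fintype.card ι - 1) * (1 - c * t) ^ Fintype.card κ) := by
  have hmeas : MeasurableSet {z : (ι → ℝ) × (κ → ℝ) | c * ⨆ i, z.1 i ≤ ⨅ j, z.2 j} :=
    measurableSet_le (by fun_prop) (by fun_prop)
  have hnonneg : ∀ t ∈ Icc (0 : ℝ) 1, 0 ≤ 1 - c * t := fun t ht => by
    nlinarith [ht.1, ht.2]
  rw [Measure.prod_apply hmeas]
  simp_rw [preimage_ofPred_eq, pi_uniform_le_iInf]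
  rw [lintegral_comp_iSup_pi_uniform
      (g := fun t => ENNReal.ofReal (1 - max (c * t) 0) ^ Fintype.card κ) (by fun_prop),
    intervalIntegral.integral_of_le zero_le_one, ← integral_Icc_eq_integral_Ioc,
    ofReal_integral_eq_lintegral_ofReal]
  · refine setLIntegral_congr_fun measurableSet_Icc fun t ht => ?_
    rw [max_eq_left (mul_nonneg hc0 ht.1), ← ENNReal.ofReal_pow (hnonneg t ht),
      ← ENNReal.ofReal_mul (by have := ht.1; positivity)]
  · exact (Continuous.continuousOn (by fun_prop)).integrableOn_Icc
  · exact (ae_restrict_iff' measurableSet_Icc).2 (ae_of_all _ fun t ht => by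
      have := ht.1; have := hnonneg t ht; positivity)

lemma integral_natCast_mul_pow_pred_mul_one_sub_mul_pow {k : ℕ} (hk : k ≠ 0) {c : ℝ}
    (hc : c ≠ 0) :
    ∫ t in (0 : ℝ)..1, k * t ^ (k - 1) * (1 - c * t) ^ k
      = k / c ^ k * (∫ x in (0 : ℝ)..c, x ^ k * (1 - x) ^ (k - 1)) + (1 - c) ^ k := by
  have hderiv : ∀ t : ℝ, HasDerivAt (fun t => t ^ k * (1 - c * t) ^ k)
      (k * t ^ (k - 1) * (1 - c * t) ^ k - k * c * (t ^ k * (1 - c * t) ^ (k - 1))) t := by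
    intro t
    have h := (hasDerivAt_pow k t).mul
      ((((hasDerivAt_id' t).const_mul c).const_sub 1).fun_pow k)
    exact h.congr_deriv (by ring)
  have hparts : ∫ t in (0 : ℝ)..1,
      (k * t ^ (k - 1) * (1 - c * t) ^ k - k * c * (t ^ k * (1 - c * t) ^ (k - 1)))
        = (1 - c) ^ k := by
    rw [intervalIntegral.integral_eq_sub_of_hasDerivAt (fun t _ => hderiv t)
      (by apply Continuous.intervalIntegrable; fun_prop)]
    simp [zero_pow hk]
  have hsubst : ∫ t in (0 : ℝ)..1, t ^ k * (1 - c * t) ^ (k - 1)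
      = (c ^ (k + 1))⁻¹ * ∫ x in (0 : ℝ)..c, x ^ k * (1 - x) ^ (k - 1) := by
    have h := intervalIntegral.integral_comp_mul_left (a := 0) (b := 1)
      (fun x : ℝ => x ^ k * (1 - x) ^ (k - 1)) hc
    simp only [mul_zero, mul_one, mul_pow, smul_eq_mul] at h
    rw [pow_succ, mul_inv, mul_assoc, ← h, ← intervalIntegral.integral_const_mul]
    refine intervalIntegral.integral_congr fun t _ => ?_
    field_simp
  rw [intervalIntegral.integral_sub (by apply Continuous.intervalIntegrable; fun_prop)
      (by apply Continuous.intervalIntegrable; fun_prop),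
    intervalIntegral.integral_const_mul, hsubst] at hparts
  rw [← hparts]
  field_simp
  ring

/-- For `α₀,...,α_{2k-1}` i.i.d. uniform on `[0,1]` and `0 ≤ δ < 1`,
`P((1-δ)·max_{0 ≤ i ≤ k-1} α_i ≤ min_{k ≤ i ≤ 2k-1} α_i)
  = (k/(1-δ)^k)·∫₀^{1-δ} x^k (1-x)^{k-1} dx + δ^k`. -/
theorem stmt9 {k : ℕ} (hk : 0 < k) {δ : ℝ} (hδ0 : 0 ≤ δ) (hδ1 : δ < 1) :
    (Measure.pi fun _ : Fin (2 * k) => volume.restrict (Set.Icc (0 : ℝ) 1))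
        {α | (1 - δ) * (⨆ i : {j : Fin (2 * k) // (j : ℕ) < k}, α i.1) ≤
          ⨅ i : {j : Fin (2 * k) // k ≤ (j : ℕ)}, α i.1}
      = ENNReal.ofReal
          (((k : ℝ) / (1 - δ) ^ k) * (∫ x in (0 : ℝ)..(1 - δ), x ^ k * (1 - x) ^ (k - 1))
            + δ ^ k) := by
  let p : Fin (2 * k) → Prop := fun j => (j : ℕ) < k
  have hcard : Fintype.card {j // p j} = k := Fintype.card_fin_lt_of_le (by omega)
  have hcard' : Fintype.card {j // ¬p j} = k := by
    rw [Fintype.card_subtype_compl, hcard, Fintype.card_fin]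
    omega
  have : Nonempty {j // p j} := Fintype.card_pos_iff.mp (by omega)
  have : Nonempty {j // ¬p j} := Fintype.card_pos_iff.mp (by omega)
  have hevent : {α : Fin (2 * k) → ℝ | (1 - δ) * (⨆ i : {j // p j}, α i.1) ≤
        ⨅ i : {j : Fin (2 * k) // k ≤ (j : ℕ)}, α i.1}
      = MeasurableEquiv.piEquivPiSubtypeProd (fun _ => ℝ) p ⁻¹'
          {z | (1 - δ) * ⨆ i, z.1 i ≤ ⨅ j, z.2 j} := by
    ext α
    have hinf : ⨅ i : {j : Fin (2 * k) // k ≤ (j : ℕ)}, α i.1 = ⨅ i : {j // ¬p j}, α i.1 :=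
      (Equiv.subtypeEquivRight fun _ => not_lt.symm).iInf_congr fun _ => rfl
    rw [mem_ofPred_eq, hinf]
    rfl
  rw [hevent, (measurePreserving_piEquivPiSubtypeProd _ p).measure_preimage_equiv,
    prod_pi_uniform_mul_iSup_le_iInf (by linarith) (by linarith), hcard, hcard',
    integral_natCast_mul_pow_pred_mul_one_sub_mul_pow hk.ne' (by linarith), sub_sub_cancel]
end

section
/- For 0 ≤ δ < 1 and k ≥ 1, the following integral bound holds: (k/(1−δ)^k)·∫₀^{1−δ} x^k (1−x)^{k−1} dx + δ^k ≤ binom(2k,k)^{-1}·(1−δ^{2k})/(1−δ)^k + δ^k. -/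
/-!
The upper binomial tail `∑_{j > k} C(2k, j) t^j (1 - t)^(2k - j)`, a sum of Bernstein
polynomials, is an antiderivative of `k C(2k, k) t^k (1 - t)^(k - 1)`: the derivatives of
consecutive Bernstein polynomials telescope. The tail vanishes at `t = 0`, and at `t = 1 - δ`
it is at most the full binomial sum `1` minus its `j = 0` term `δ^(2k)`.
-/

open Finset Polynomial

namespace bernsteinPolynomial

variable {R : Type*} [CommRing R]

theorem derivative_sum_Ico_succ {m k : ℕ} (hk : k ≤ m + 1) :
    derivative (∑ ν ∈ Ico k (m + 1), bernsteinPolynomial R (m + 1) (ν + 1)) =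
      (m + 1) * bernsteinPolynomial R m k := by
  have telescope := sum_Ico_sub (fun ν => bernsteinPolynomial R m ν) hk
  simp only [derivative_sum, derivative_succ_aux, ← mul_sum, eq_zero_of_lt R (Nat.lt_succ_self m)]
    at telescope ⊢
  simp only [← neg_sub (bernsteinPolynomial R m (_ + 1)), sum_neg_distrib, telescope, zero_sub,
    neg_neg]

theorem sum_Ico_succ_eval_le {n k : ℕ} {t : ℝ} (ht0 : 0 ≤ t) (ht1 : t ≤ 1) :
    ∑ ν ∈ Ico k n, (bernsteinPolynomial ℝ n (ν + 1)).eval t ≤ 1 - (1 - t) ^ n := by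
  have nonneg (ν : ℕ) : 0 ≤ (bernsteinPolynomial ℝ n ν).eval t := by
    simp only [bernsteinPolynomial, eval_mul, eval_pow, eval_sub, eval_one, eval_X, eval_natCast]
    have : 0 ≤ 1 - t := by linarith
    positivity
  have total := congrArg (eval t) (bernsteinPolynomial.sum ℝ n)
  rw [eval_finsetSum, sum_range_succ', eval_one] at total
  calc ∑ ν ∈ Ico k n, (bernsteinPolynomial ℝ n (ν + 1)).eval t
      ≤ ∑ ν ∈ range n, (bernsteinPolynomial ℝ n (ν + 1)).eval t :=
        sum_le_sum_of_subset_of_nonneg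
          (fun ν hν => by simp only [mem_Ico, mem_range] at hν ⊢; omega) fun ν _ _ => nonneg _
    _ = 1 - (1 - t) ^ n := by
        have first : (bernsteinPolynomial ℝ n 0).eval t = (1 - t) ^ n := by
          simp [bernsteinPolynomial]
        linarith

theorem integral_eval_le {m k : ℕ} (hk : k ≤ m + 1) {t : ℝ} (ht0 : 0 ≤ t) (ht1 : t ≤ 1) :
    (m + 1) * ∫ x in (0 : ℝ)..t, (bernsteinPolynomial ℝ m k).eval x ≤
      1 - (1 - t) ^ (m + 1) := by
  have antiderivative := intervalIntegral.integral_eq_sub_of_hasDerivAt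
    (fun x _ => (∑ ν ∈ Ico k (m + 1), bernsteinPolynomial ℝ (m + 1) (ν + 1)).hasDerivAt x)
    ((Polynomial.continuous _).intervalIntegrable 0 t)
  simp only [derivative_sum_Ico_succ hk, eval_mul, eval_add, eval_natCast, eval_one,
    intervalIntegral.integral_const_mul, eval_finsetSum, eval_at_0, Nat.add_eq_zero_iff,
    one_ne_zero, and_false, if_false, sum_const_zero, sub_zero] at antiderivative
  rw [antiderivative]
  exact sum_Ico_succ_eval_le ht0 ht1

end bernsteinPolynomial

theorem mul_centralBinom_mul_integral_pow_mul_le {k : ℕ} (hk : 1 ≤ k) {t : ℝ} (ht0 : 0 ≤ t)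
    (ht1 : t ≤ 1) :
    k * (2 * k).choose k * ∫ x in (0 : ℝ)..t, x ^ k * (1 - x) ^ (k - 1) ≤
      1 - (1 - t) ^ (2 * k) := by
  obtain ⟨m, rfl⟩ : ∃ m, k = m + 1 := ⟨k - 1, by omega⟩
  have bernstein_integral :
      ∫ x in (0 : ℝ)..t, (bernsteinPolynomial ℝ (2 * m + 1) (m + 1)).eval x =
        (2 * m + 1).choose (m + 1) *
          ∫ x in (0 : ℝ)..t, x ^ (m + 1) * (1 - x) ^ (m + 1 - 1) := by
    rw [← intervalIntegral.integral_const_mul]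
    congr 1 with x
    simp [bernsteinPolynomial, show 2 * m + 1 - (m + 1) = m by omega, mul_assoc]
  have central_choose :
      (m + 1) * (2 * (m + 1)).choose (m + 1) = (2 * m + 1 + 1) * (2 * m + 1).choose (m + 1) := by
    rw [show 2 * (m + 1) = 2 * m + 1 + 1 by ring, Nat.choose_symm_half, Nat.add_one_mul_choose_eq,
      mul_comm]
  have tail_bound := bernsteinPolynomial.integral_eval_le (m := 2 * m + 1) (k := m + 1)
    (by omega) ht0 ht1
  rw [bernstein_integral, ← mul_assoc] at tail_bound
  rw [show 2 * (m + 1) = 2 * m + 1 + 1 by ring]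
  convert tail_bound using 2
  exact_mod_cast central_choose

/-- Integral bound:
`(k/(1-δ)^k)·∫₀^{1-δ} x^k (1-x)^{k-1} dx + δ^k
  ≤ binom(2k,k)⁻¹·(1-δ^{2k})/(1-δ)^k + δ^k` for `0 ≤ δ < 1` and `k ≥ 1`. -/
theorem stmt10 {k : ℕ} (hk : 1 ≤ k) {δ : ℝ} (hδ0 : 0 ≤ δ) (hδ1 : δ < 1) :
    ((k : ℝ) / (1 - δ) ^ k) * (∫ x in (0 : ℝ)..(1 - δ), x ^ k * (1 - x) ^ (k - 1)) + δ ^ k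
      ≤ ((Nat.choose (2 * k) k : ℝ))⁻¹ * (1 - δ ^ (2 * k)) / (1 - δ) ^ k + δ ^ k := by
  have tail_bound :=
    mul_centralBinom_mul_integral_pow_mul_le hk (t := 1 - δ) (by linarith) (by linarith)
  rw [sub_sub_cancel, mul_right_comm] at tail_bound
  have hC : (0 : ℝ) < (2 * k).choose k := by exact_mod_cast Nat.choose_pos (by omega)
  gcongr ?_ + _
  rw [div_mul_eq_mul_div]
  exact div_le_div_of_nonneg_right ((le_inv_mul_iff₀ hC).mpr (by linarith))
    (pow_nonneg (by linarith) _)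
end
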